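/- arXiv:1210.3609 — 2 statements merged into one kernel-verified Lean document; each statement's English description precedes it below -/
import Mathlib

section
/- (Lemma 2) The value function V is convex in each coordinate separately: for all c ∈ [0,1], all p, p' ∈ [0,1] and all p1, p2 ∈ [0,1], V(c·p + (1−c)·p', p2) ≤ c·V(p, p2) + (1−c)·V(p', p2) and V(p1, c·p + (1−c)·p') ≤ c·V(p1, p) + (1−c)·V(p1, p'). -/
open Set

noncomputable section

/-- Belief update for an unobserved channel: `T p = λ0 + (λ1 - λ0) p`. -/
def Tr (l0 l1 p : ℝ) : ℝ := l0 + (l1 - l0) * p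

/-- The four power allocation actions. -/
inductive PAct
  | Bb  -- balanced
  | B1  -- bet on channel 1
  | B2  -- bet on channel 2
  | Br  -- conservative

/-- Action-value functional `W_a` computed from a function `W`. -/
def Q (l0 l1 β Rl Rh Cl Ch : ℝ) (W : ℝ → ℝ → ℝ) : PAct → ℝ → ℝ → ℝ
  | PAct.Bb => fun p1 p2 =>
      (p1 + p2) * (Rl + Cl) - 2 * Cl +
        β * ((1 - p1) * (1 - p2) * W l0 l0 + p1 * p2 * W l1 l1 +
             p1 * (1 - p2) * W l1 l0 + (1 - p1) * p2 * W l0 l1)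
  | PAct.B1 => fun p1 p2 =>
      (Rh + Ch) * p1 - Ch +
        β * (p1 * W l1 (Tr l0 l1 p2) + (1 - p1) * W l0 (Tr l0 l1 p2))
  | PAct.B2 => fun p1 p2 =>
      (Rh + Ch) * p2 - Ch +
        β * (p2 * W (Tr l0 l1 p1) l1 + (1 - p2) * W (Tr l0 l1 p1) l0)
  | PAct.Br => fun p1 p2 => β * W (Tr l0 l1 p1) (Tr l0 l1 p2)

/-- The Bellman operator `L W = max over the four actions of W_a`. -/
def Bop (l0 l1 β Rl Rh Cl Ch : ℝ) (W : ℝ → ℝ → ℝ) (p1 p2 : ℝ) : ℝ :=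
  max (max (Q l0 l1 β Rl Rh Cl Ch W PAct.Bb p1 p2)
           (Q l0 l1 β Rl Rh Cl Ch W PAct.B1 p1 p2))
      (max (Q l0 l1 β Rl Rh Cl Ch W PAct.B2 p1 p2)
           (Q l0 l1 β Rl Rh Cl Ch W PAct.Br p1 p2))

/-- Boundedness on the belief space `[0,1] × [0,1]`. -/
def BddOnSq (W : ℝ → ℝ → ℝ) : Prop :=
  ∃ M : ℝ, ∀ p1 ∈ Icc (0:ℝ) 1, ∀ p2 ∈ Icc (0:ℝ) 1, |W p1 p2| ≤ M

/-- Being a fixed point of the Bellman operator on the belief space. -/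
def IsFix (l0 l1 β Rl Rh Cl Ch : ℝ) (V : ℝ → ℝ → ℝ) : Prop :=
  ∀ p1 ∈ Icc (0:ℝ) 1, ∀ p2 ∈ Icc (0:ℝ) 1,
    V p1 p2 = Bop l0 l1 β Rl Rh Cl Ch V p1 p2

open Filter Topology

/-!
Write `δ(W)` for the largest amount by which `W` fails to be convex in its first coordinate on
the unit square. The action values `W_{B_b}` and `W_{B_1}` are affine in `p1`, while `W_{B_2}` and
`W_{B_r}` evaluate `W` at `T(p1)` in the first coordinate, with `T` affine and weights `β` times a
probability vector; hence `δ(LW) ≤ β δ(W)`. For the fixed point `V` this gives `δ(V) ≤ βⁿ δ(V)`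
for every `n`, and `δ(V)` is finite because `V` is bounded, so `δ(V) ≤ 0`. The second coordinate
follows by symmetry: `L` commutes with swapping the two channels.
-/

lemma convexComb_mem_Icc {c a b : ℝ} (hc : c ∈ Icc (0:ℝ) 1) (ha : a ∈ Icc (0:ℝ) 1)
    (hb : b ∈ Icc (0:ℝ) 1) : c * a + (1 - c) * b ∈ Icc (0:ℝ) 1 := by
  obtain ⟨hc0, hc1⟩ := hc
  obtain ⟨ha0, ha1⟩ := ha
  obtain ⟨hb0, hb1⟩ := hb
  constructor <;> nlinarith

lemma Tr_eq_convexComb (l0 l1 p : ℝ) : Tr l0 l1 p = p * l1 + (1 - p) * l0 := by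
  unfold Tr; ring

lemma Tr_mem_Icc {l0 l1 p : ℝ} (hl0 : l0 ∈ Icc (0:ℝ) 1) (hl1 : l1 ∈ Icc (0:ℝ) 1)
    (hp : p ∈ Icc (0:ℝ) 1) : Tr l0 l1 p ∈ Icc (0:ℝ) 1 :=
  Tr_eq_convexComb l0 l1 p ▸ convexComb_mem_Icc hp hl1 hl0

lemma Tr_convexComb (l0 l1 c a b : ℝ) :
    Tr l0 l1 (c * a + (1 - c) * b) = c * Tr l0 l1 a + (1 - c) * Tr l0 l1 b := by
  unfold Tr; ring

def ConvexFstUpTo (W : ℝ → ℝ → ℝ) (ε : ℝ) : Prop :=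
  ∀ c ∈ Icc (0:ℝ) 1, ∀ a ∈ Icc (0:ℝ) 1, ∀ b ∈ Icc (0:ℝ) 1, ∀ q ∈ Icc (0:ℝ) 1,
    W (c * a + (1 - c) * b) q ≤ c * W a q + (1 - c) * W b q + ε

lemma BddOnSq.exists_convexFstUpTo {W : ℝ → ℝ → ℝ} (hW : BddOnSq W) :
    ∃ K, 0 ≤ K ∧ ConvexFstUpTo W K := by
  obtain ⟨M, hM⟩ := hW
  have hM0 : 0 ≤ M := (abs_nonneg _).trans (hM 0 (by simp) 0 (by simp))
  refine ⟨2 * M, by positivity, fun c hc a ha b hb q hq => ?_⟩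
  have hm := (abs_le.mp (hM _ (convexComb_mem_Icc hc ha hb) q hq)).2
  have hWa := (abs_le.mp (hM a ha q hq)).1
  have hWb := (abs_le.mp (hM b hb q hq)).1
  nlinarith [hc.1, hc.2]

lemma ConvexFstUpTo.zero_of_forall_pow {W : ℝ → ℝ → ℝ} {β K : ℝ} (hβ0 : 0 ≤ β) (hβ1 : β < 1)
    (hW : ∀ n : ℕ, ConvexFstUpTo W (β ^ n * K)) : ConvexFstUpTo W 0 := by
  intro c hc a ha b hb q hq
  have hlim : Tendsto (fun n : ℕ => c * W a q + (1 - c) * W b q + β ^ n * K) atTop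
      (𝓝 (c * W a q + (1 - c) * W b q + 0 * K)) :=
    tendsto_const_nhds.add ((tendsto_pow_atTop_nhds_zero_of_lt_one hβ0 hβ1).mul_const K)
  simpa using ge_of_tendsto' hlim fun n => hW n c hc a ha b hb q hq

section Bellman

variable {l0 l1 β Rl Rh Cl Ch : ℝ} {W : ℝ → ℝ → ℝ}

lemma Q_le_Bop (a : PAct) (x y : ℝ) :
    Q l0 l1 β Rl Rh Cl Ch W a x y ≤ Bop l0 l1 β Rl Rh Cl Ch W x y := by
  unfold Bop
  cases a
  · exact le_max_of_le_left (le_max_left _ _)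
  · exact le_max_of_le_left (le_max_right _ _)
  · exact le_max_of_le_right (le_max_left _ _)
  · exact le_max_of_le_right (le_max_right _ _)

lemma Bop_le {x y r : ℝ} (h : ∀ a, Q l0 l1 β Rl Rh Cl Ch W a x y ≤ r) :
    Bop l0 l1 β Rl Rh Cl Ch W x y ≤ r :=
  max_le (max_le (h _) (h _)) (max_le (h _) (h _))

lemma Bop_flip (x y : ℝ) :
    Bop l0 l1 β Rl Rh Cl Ch (flip W) x y = Bop l0 l1 β Rl Rh Cl Ch W y x := by
  have hBb : Q l0 l1 β Rl Rh Cl Ch (flip W) PAct.Bb x y = Q l0 l1 β Rl Rh Cl Ch W PAct.Bb y x := by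
    simp only [Q, flip]; ring
  unfold Bop
  rw [hBb, max_max_max_comm]
  -- the `B_1` and `B_2` values of `flip W` are, definitionally, the `B_2` and `B_1` values of `W`
  rfl

lemma Q_convexComb_fst_le (hβ0 : 0 ≤ β) (hl0 : l0 ∈ Icc (0:ℝ) 1) (hl1 : l1 ∈ Icc (0:ℝ) 1)
    {ε : ℝ} (hε : 0 ≤ ε) (hW : ConvexFstUpTo W ε) (act : PAct) {c a b q : ℝ}
    (hc : c ∈ Icc (0:ℝ) 1) (ha : a ∈ Icc (0:ℝ) 1) (hb : b ∈ Icc (0:ℝ) 1)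
    (hq : q ∈ Icc (0:ℝ) 1) :
    Q l0 l1 β Rl Rh Cl Ch W act (c * a + (1 - c) * b) q ≤
      c * Q l0 l1 β Rl Rh Cl Ch W act a q + (1 - c) * Q l0 l1 β Rl Rh Cl Ch W act b q
        + β * ε := by
  have hβε : 0 ≤ β * ε := mul_nonneg hβ0 hε
  have hWT := fun r hr => hW c hc _ (Tr_mem_Icc hl0 hl1 ha) _ (Tr_mem_Icc hl0 hl1 hb) r hr
  cases act
  · simp only [Q]; linarith
  · simp only [Q]; linarith
  · simp only [Q, Tr_convexComb]
    linarith [mul_le_mul_of_nonneg_left (hWT l1 hl1) (mul_nonneg hβ0 hq.1),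
      mul_le_mul_of_nonneg_left (hWT l0 hl0) (mul_nonneg hβ0 (sub_nonneg.mpr hq.2))]
  · simp only [Q, Tr_convexComb]
    linarith [mul_le_mul_of_nonneg_left (hWT _ (Tr_mem_Icc hl0 hl1 hq)) hβ0]

lemma ConvexFstUpTo.bop (hβ0 : 0 ≤ β) (hl0 : l0 ∈ Icc (0:ℝ) 1) (hl1 : l1 ∈ Icc (0:ℝ) 1)
    {ε : ℝ} (hε : 0 ≤ ε) (hW : ConvexFstUpTo W ε) :
    ConvexFstUpTo (Bop l0 l1 β Rl Rh Cl Ch W) (β * ε) := by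
  intro c hc a ha b hb q hq
  refine Bop_le fun act => (Q_convexComb_fst_le hβ0 hl0 hl1 hε hW act hc ha hb hq).trans ?_
  have hc0 : 0 ≤ c := hc.1
  have hc1 : 0 ≤ 1 - c := sub_nonneg.mpr hc.2
  gcongr <;> exact Q_le_Bop act _ _

end Bellman

section FixedPoint

variable {l0 l1 β Rl Rh Cl Ch : ℝ} {V : ℝ → ℝ → ℝ}

lemma IsFix.flip (hV : IsFix l0 l1 β Rl Rh Cl Ch V) : IsFix l0 l1 β Rl Rh Cl Ch (flip V) :=
  fun x hx y hy => (hV y hy x hx).trans (Bop_flip x y).symm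

lemma BddOnSq.flip (hV : BddOnSq V) : BddOnSq (flip V) :=
  let ⟨M, hM⟩ := hV
  ⟨M, fun x hx y hy => hM y hy x hx⟩

lemma IsFix.convexFstUpTo_mul (hV : IsFix l0 l1 β Rl Rh Cl Ch V) (hβ0 : 0 ≤ β)
    (hl0 : l0 ∈ Icc (0:ℝ) 1) (hl1 : l1 ∈ Icc (0:ℝ) 1) {ε : ℝ} (hε : 0 ≤ ε)
    (hVε : ConvexFstUpTo V ε) : ConvexFstUpTo V (β * ε) := by
  intro c hc a ha b hb q hq
  rw [hV _ (convexComb_mem_Icc hc ha hb) q hq, hV a ha q hq, hV b hb q hq]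
  exact hVε.bop hβ0 hl0 hl1 hε c hc a ha b hb q hq

lemma IsFix.convexFstUpTo_zero (hV : IsFix l0 l1 β Rl Rh Cl Ch V) (hVbdd : BddOnSq V)
    (hβ0 : 0 ≤ β) (hβ1 : β < 1) (hl0 : l0 ∈ Icc (0:ℝ) 1) (hl1 : l1 ∈ Icc (0:ℝ) 1) :
    ConvexFstUpTo V 0 := by
  obtain ⟨K, hK0, hK⟩ := hVbdd.exists_convexFstUpTo
  refine ConvexFstUpTo.zero_of_forall_pow (K := K) hβ0 hβ1 fun n => ?_
  induction n with
  | zero => simpa using hK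
  | succ n ih =>
    rw [pow_succ', mul_assoc]
    exact hV.convexFstUpTo_mul hβ0 hl0 hl1 (by positivity) ih

end FixedPoint

theorem value_convex_general
    (l0 l1 β Rl Rh Cl Ch : ℝ)
    (hl0 : l0 ∈ Icc (0:ℝ) 1) (hl1 : l1 ∈ Icc (0:ℝ) 1)
    (hβ0 : 0 ≤ β) (hβ1 : β < 1)
    (V : ℝ → ℝ → ℝ) (hVbdd : BddOnSq V)
    (hVfix : IsFix l0 l1 β Rl Rh Cl Ch V)
    (c : ℝ) (hc : c ∈ Icc (0:ℝ) 1)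
    (p : ℝ) (hp : p ∈ Icc (0:ℝ) 1) (p' : ℝ) (hp' : p' ∈ Icc (0:ℝ) 1)
    (p1 : ℝ) (hp1 : p1 ∈ Icc (0:ℝ) 1) (p2 : ℝ) (hp2 : p2 ∈ Icc (0:ℝ) 1) :
    V (c * p + (1 - c) * p') p2 ≤ c * V p p2 + (1 - c) * V p' p2 ∧
    V p1 (c * p + (1 - c) * p') ≤ c * V p1 p + (1 - c) * V p1 p' := by
  have hfst := hVfix.convexFstUpTo_zero hVbdd hβ0 hβ1 hl0 hl1
  have hsnd := hVfix.flip.convexFstUpTo_zero hVbdd.flip hβ0 hβ1 hl0 hl1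
  exact ⟨by simpa using hfst c hc p hp p' hp' p2 hp2,
    by simpa [flip] using hsnd c hc p hp p' hp' p1 hp1⟩

/-- Lemma 2: the value function is convex in each coordinate separately. -/
theorem value_convex
    (l0 l1 β Rl Rh Cl Ch : ℝ)
    (hl0 : l0 ∈ Icc (0:ℝ) 1) (hl1 : l1 ∈ Icc (0:ℝ) 1) (hl01 : l0 < l1)
    (hβ0 : 0 ≤ β) (hβ1 : β < 1)
    (hRl : 0 < Rl) (hRh : 0 < Rh) (hCl : 0 < Cl) (hCh : 0 < Ch)
    (hRlh : Rl < Rh) (hRh2 : Rh < 2 * Rl)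
    (hClh : Cl < Ch) (hCh2 : Ch < 2 * Cl)
    (hRhCh : Ch < Rh) (hRlCl : Cl < Rl)
    (V : ℝ → ℝ → ℝ) (hVbdd : BddOnSq V)
    (hVfix : IsFix l0 l1 β Rl Rh Cl Ch V)
    (c : ℝ) (hc : c ∈ Icc (0:ℝ) 1)
    (p : ℝ) (hp : p ∈ Icc (0:ℝ) 1) (p' : ℝ) (hp' : p' ∈ Icc (0:ℝ) 1)
    (p1 : ℝ) (hp1 : p1 ∈ Icc (0:ℝ) 1) (p2 : ℝ) (hp2 : p2 ∈ Icc (0:ℝ) 1) :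
    V (c * p + (1 - c) * p') p2 ≤ c * V p p2 + (1 - c) * V p' p2 ∧
    V p1 (c * p + (1 - c) * p') ≤ c * V p1 p + (1 - c) * V p1 p' :=
  value_convex_general l0 l1 β Rl Rh Cl Ch hl0 hl1 hβ0 hβ1 V hVbdd hVfix c hc p hp p' hp' p1 hp1 p2
    hp2
end
end

section
/- On the edge p1 = 0 of the belief space the optimal policy has a threshold structure: there exists ρ ∈ [0,1] such that for every p2 ∈ [0,ρ) the point (0,p2) lies in Φ_{B_r} (i.e. V(0,p2) = V_{B_r}(0,p2)), and for every p2 ∈ [ρ,1] the point (0,p2) lies in Φ_{B_2} (i.e. V(0,p2) = V_{B_2}(0,p2)). -/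
/-!
On the edge `p1 = 0` we have `V_B2 - V_Bb = p (Rh - Rl + Ch - Cl) + 2 Cl - Ch ≥ 0` and
`V_Br - V_B1 = Ch > 0`, so `V(0,p) = max (V_B2(0,p)) (V_Br(0,p))`. The advantage
`f p = V_B2(0,p) - V_Br(0,p)` is an affine function minus `β V(λ0, T p)`. The Bellman operator
preserves convexity and continuity of each section `V(q, ·)` on `[0,1]` and is a `β`-contraction,
so value iteration converges uniformly to `V` and these sections of `V` are convex and continuous.
Hence `f` is concave and continuous with `f 1 = Rh > 0`, and `{p ∈ [0,1] | 0 ≤ f p}` is an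
interval `[ρ, 1]`.
-/

open Set

noncomputable section

/-- Decision region of action `a`: beliefs where action `a` achieves the value. -/
def Phi (l0 l1 β Rl Rh Cl Ch : ℝ) (V : ℝ → ℝ → ℝ) (a : PAct) : Set (ℝ × ℝ) :=
  {p : ℝ × ℝ | p.1 ∈ Icc (0:ℝ) 1 ∧ p.2 ∈ Icc (0:ℝ) 1 ∧
    V p.1 p.2 = Q l0 l1 β Rl Rh Cl Ch V a p.1 p.2}

open Filter Topology

theorem ConvexOn.of_tendsto {ι E : Type*} [AddCommGroup E] [Module ℝ E] {s : Set E}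
    {l : Filter ι} [l.NeBot] {F : ι → E → ℝ} {g : E → ℝ}
    (hF : ∀ᶠ i in l, ConvexOn ℝ s (F i))
    (h : ∀ x ∈ s, Tendsto (fun i => F i x) l (𝓝 (g x))) : ConvexOn ℝ s g := by
  obtain ⟨i, hi⟩ := hF.exists
  refine ⟨hi.1, fun x hx y hy a b ha hb hab => ?_⟩
  exact le_of_tendsto_of_tendsto (h _ (hi.1 hx hy ha hb hab))
    (((h x hx).const_smul a).add ((h y hy).const_smul b))
    (hF.mono fun i hi => hi.2 hx hy ha hb hab)

theorem convexOn_of_affine {s : Set ℝ} (hs : Convex ℝ s) {f : ℝ → ℝ}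
    (hf : ∀ x, f x = (f 1 - f 0) * x + f 0) : ConvexOn ℝ s f :=
  (((LinearMap.mulLeft ℝ (f 1 - f 0)).convexOn hs).add_const (f 0)).congr
    fun x _ => (hf x).symm

theorem concaveOn_of_affine {s : Set ℝ} (hs : Convex ℝ s) {f : ℝ → ℝ}
    (hf : ∀ x, f x = (f 1 - f 0) * x + f 0) : ConcaveOn ℝ s f :=
  (((LinearMap.mulLeft ℝ (f 1 - f 0)).concaveOn hs).add_const (f 0)).congr
    fun x _ => (hf x).symm

theorem abs_mul_add_one_sub_mul_le {p x y K : ℝ} (hp : p ∈ Icc (0:ℝ) 1)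
    (hx : |x| ≤ K) (hy : |y| ≤ K) : |p * x + (1 - p) * y| ≤ K :=
  abs_le.2 <| by
    simpa [add_comm] using (convex_Icc (-K) K) (abs_le.1 hy) (abs_le.1 hx)
      (sub_nonneg.2 hp.2) hp.1 (sub_add_cancel 1 p)

theorem exists_threshold_of_concaveOn {a b : ℝ} (hab : a ≤ b) {f : ℝ → ℝ}
    (hf : ConcaveOn ℝ (Icc a b) f) (hfc : ContinuousOn f (Icc a b)) (hb : 0 ≤ f b) :
    ∃ ρ ∈ Icc a b, (∀ p ∈ Ico a ρ, f p < 0) ∧ ∀ p ∈ Icc ρ b, 0 ≤ f p := by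
  set S := {x ∈ Icc a b | 0 ≤ f x}
  have hbS : b ∈ S := ⟨right_mem_Icc.2 hab, hb⟩
  have hSbdd : BddBelow S := ⟨a, fun x hx => hx.1.1⟩
  have hρS : sInf S ∈ S :=
    (hfc.preimage_isClosed_of_isClosed isClosed_Icc isClosed_Ici).csInf_mem ⟨b, hbS⟩ hSbdd
  refine ⟨sInf S, hρS.1, fun p hp => ?_, fun p hp => ?_⟩
  · by_contra! hfp
    exact hp.2.not_ge (csInf_le hSbdd ⟨⟨hp.1, hp.2.le.trans hρS.1.2⟩, hfp⟩)
  · exact ((hf.convex_ge 0).ordConnected.out hρS hbS hp).2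

section BeliefMDP

variable {l0 l1 β Rl Rh Cl Ch : ℝ}

theorem Tr_eq_lineMap (l0 l1 : ℝ) : Tr l0 l1 = AffineMap.lineMap l0 l1 := by
  ext p
  rw [AffineMap.lineMap_apply_ring']
  simp only [Tr]; ring

theorem mapsTo_Tr (hl0 : l0 ∈ Icc (0:ℝ) 1) (hl1 : l1 ∈ Icc (0:ℝ) 1) :
    MapsTo (Tr l0 l1) (Icc 0 1) (Icc 0 1) :=
  Tr_eq_lineMap l0 l1 ▸ (convex_Icc 0 1).mapsTo_lineMap hl0 hl1

theorem ConvexOn.comp_Tr {g : ℝ → ℝ} (hg : ConvexOn ℝ (Icc 0 1) g)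
    (hl0 : l0 ∈ Icc (0:ℝ) 1) (hl1 : l1 ∈ Icc (0:ℝ) 1) :
    ConvexOn ℝ (Icc 0 1) (fun p => g (Tr l0 l1 p)) := by
  rw [Tr_eq_lineMap]
  exact (hg.comp_affineMap _).subset ((convex_Icc 0 1).mapsTo_lineMap hl0 hl1) (convex_Icc 0 1)

theorem ContinuousOn.comp_Tr {g : ℝ → ℝ} (hg : ContinuousOn g (Icc 0 1))
    (hl0 : l0 ∈ Icc (0:ℝ) 1) (hl1 : l1 ∈ Icc (0:ℝ) 1) :
    ContinuousOn (fun p => g (Tr l0 l1 p)) (Icc 0 1) :=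
  hg.comp (by unfold Tr; fun_prop) (mapsTo_Tr hl0 hl1)

theorem convexOn_Q (hl0 : l0 ∈ Icc (0:ℝ) 1) (hl1 : l1 ∈ Icc (0:ℝ) 1) (hβ0 : 0 ≤ β)
    {W : ℝ → ℝ → ℝ} (hW : ∀ q ∈ Icc (0:ℝ) 1, ConvexOn ℝ (Icc 0 1) (W q))
    (a : PAct) {p1 : ℝ} (hp1 : p1 ∈ Icc (0:ℝ) 1) :
    ConvexOn ℝ (Icc 0 1) (Q l0 l1 β Rl Rh Cl Ch W a p1) := by
  cases a
  case Bb | B2 => exact convexOn_of_affine (convex_Icc 0 1) fun x => by simp only [Q]; ring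
  case B1 =>
    exact (convexOn_const _ (convex_Icc 0 1)).add <|
      ((((hW l1 hl1).comp_Tr hl0 hl1).smul hp1.1).add
        (((hW l0 hl0).comp_Tr hl0 hl1).smul (sub_nonneg.2 hp1.2))).smul hβ0
  case Br => exact ((hW _ (mapsTo_Tr hl0 hl1 hp1)).comp_Tr hl0 hl1).smul hβ0

theorem continuousOn_Q (hl0 : l0 ∈ Icc (0:ℝ) 1) (hl1 : l1 ∈ Icc (0:ℝ) 1)
    {W : ℝ → ℝ → ℝ} (hW : ∀ q ∈ Icc (0:ℝ) 1, ContinuousOn (W q) (Icc 0 1))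
    (a : PAct) {p1 : ℝ} (hp1 : p1 ∈ Icc (0:ℝ) 1) :
    ContinuousOn (Q l0 l1 β Rl Rh Cl Ch W a p1) (Icc 0 1) := by
  cases a
  case Bb | B2 => exact Continuous.continuousOn (by simp only [Q]; fun_prop)
  case B1 =>
    exact continuousOn_const.add <| continuousOn_const.mul <|
      (continuousOn_const.mul ((hW l1 hl1).comp_Tr hl0 hl1)).add
        (continuousOn_const.mul ((hW l0 hl0).comp_Tr hl0 hl1))
  case Br => exact continuousOn_const.mul ((hW _ (mapsTo_Tr hl0 hl1 hp1)).comp_Tr hl0 hl1)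

theorem abs_Q_sub_le (hl0 : l0 ∈ Icc (0:ℝ) 1) (hl1 : l1 ∈ Icc (0:ℝ) 1) (hβ0 : 0 ≤ β)
    {W₁ W₂ : ℝ → ℝ → ℝ} {K : ℝ}
    (hK : ∀ x ∈ Icc (0:ℝ) 1, ∀ y ∈ Icc (0:ℝ) 1, |W₁ x y - W₂ x y| ≤ K)
    (a : PAct) {p1 p2 : ℝ} (hp1 : p1 ∈ Icc (0:ℝ) 1) (hp2 : p2 ∈ Icc (0:ℝ) 1) :
    |Q l0 l1 β Rl Rh Cl Ch W₁ a p1 p2 - Q l0 l1 β Rl Rh Cl Ch W₂ a p1 p2| ≤ β * K := by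
  have hT1 := mapsTo_Tr hl0 hl1 hp1
  have hT2 := mapsTo_Tr hl0 hl1 hp2
  set d := fun x y => W₁ x y - W₂ x y
  suffices ∃ e, Q l0 l1 β Rl Rh Cl Ch W₁ a p1 p2 - Q l0 l1 β Rl Rh Cl Ch W₂ a p1 p2 = β * e
      ∧ |e| ≤ K by
    obtain ⟨e, he, heK⟩ := this
    rw [he, abs_mul, abs_of_nonneg hβ0]
    exact mul_le_mul_of_nonneg_left heK hβ0
  cases a
  case Bb =>
    refine ⟨p1 * (p2 * d l1 l1 + (1 - p2) * d l1 l0) +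
      (1 - p1) * (p2 * d l0 l1 + (1 - p2) * d l0 l0), by simp only [Q, d]; ring, ?_⟩
    exact abs_mul_add_one_sub_mul_le hp1
      (abs_mul_add_one_sub_mul_le hp2 (hK _ hl1 _ hl1) (hK _ hl1 _ hl0))
      (abs_mul_add_one_sub_mul_le hp2 (hK _ hl0 _ hl1) (hK _ hl0 _ hl0))
  case B1 =>
    exact ⟨_, by simp only [Q]; ring,
      abs_mul_add_one_sub_mul_le hp1 (hK _ hl1 _ hT2) (hK _ hl0 _ hT2)⟩
  case B2 =>
    exact ⟨_, by simp only [Q]; ring,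
      abs_mul_add_one_sub_mul_le hp2 (hK _ hT1 _ hl1) (hK _ hT1 _ hl0)⟩
  case Br => exact ⟨_, by simp only [Q]; ring, hK _ hT1 _ hT2⟩

theorem convexOn_Bop (hl0 : l0 ∈ Icc (0:ℝ) 1) (hl1 : l1 ∈ Icc (0:ℝ) 1) (hβ0 : 0 ≤ β)
    {W : ℝ → ℝ → ℝ} (hW : ∀ q ∈ Icc (0:ℝ) 1, ConvexOn ℝ (Icc 0 1) (W q))
    {p1 : ℝ} (hp1 : p1 ∈ Icc (0:ℝ) 1) :
    ConvexOn ℝ (Icc 0 1) (Bop l0 l1 β Rl Rh Cl Ch W p1) :=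
  have h a := convexOn_Q (Rl := Rl) (Rh := Rh) (Cl := Cl) (Ch := Ch) hl0 hl1 hβ0 hW a hp1
  ((h .Bb).sup (h .B1)).sup ((h .B2).sup (h .Br))

theorem continuousOn_Bop (hl0 : l0 ∈ Icc (0:ℝ) 1) (hl1 : l1 ∈ Icc (0:ℝ) 1)
    {W : ℝ → ℝ → ℝ} (hW : ∀ q ∈ Icc (0:ℝ) 1, ContinuousOn (W q) (Icc 0 1))
    {p1 : ℝ} (hp1 : p1 ∈ Icc (0:ℝ) 1) :
    ContinuousOn (Bop l0 l1 β Rl Rh Cl Ch W p1) (Icc 0 1) :=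
  have h a := continuousOn_Q (β := β) (Rl := Rl) (Rh := Rh) (Cl := Cl) (Ch := Ch) hl0 hl1 hW a hp1
  ((h .Bb).sup (h .B1)).sup ((h .B2).sup (h .Br))

theorem abs_Bop_sub_le (hl0 : l0 ∈ Icc (0:ℝ) 1) (hl1 : l1 ∈ Icc (0:ℝ) 1) (hβ0 : 0 ≤ β)
    {W₁ W₂ : ℝ → ℝ → ℝ} {K : ℝ}
    (hK : ∀ x ∈ Icc (0:ℝ) 1, ∀ y ∈ Icc (0:ℝ) 1, |W₁ x y - W₂ x y| ≤ K)
    {p1 p2 : ℝ} (hp1 : p1 ∈ Icc (0:ℝ) 1) (hp2 : p2 ∈ Icc (0:ℝ) 1) :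
    |Bop l0 l1 β Rl Rh Cl Ch W₁ p1 p2 - Bop l0 l1 β Rl Rh Cl Ch W₂ p1 p2| ≤ β * K := by
  have h a := abs_Q_sub_le (Rl := Rl) (Rh := Rh) (Cl := Cl) (Ch := Ch) hl0 hl1 hβ0 hK a hp1 hp2
  refine (abs_max_sub_max_le_max _ _ _ _).trans (max_le ?_ ?_) <;>
    exact (abs_max_sub_max_le_max _ _ _ _).trans (max_le (h _) (h _))

theorem convexOn_iterate_Bop (hl0 : l0 ∈ Icc (0:ℝ) 1) (hl1 : l1 ∈ Icc (0:ℝ) 1) (hβ0 : 0 ≤ β)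
    (n : ℕ) : ∀ q ∈ Icc (0:ℝ) 1, ConvexOn ℝ (Icc 0 1) ((Bop l0 l1 β Rl Rh Cl Ch)^[n] 0 q) := by
  induction n with
  | zero => exact fun _ _ => convexOn_const 0 (convex_Icc 0 1)
  | succ n ih =>
    rw [Function.iterate_succ_apply']
    exact fun _ hq => convexOn_Bop hl0 hl1 hβ0 ih hq

theorem continuousOn_iterate_Bop (hl0 : l0 ∈ Icc (0:ℝ) 1) (hl1 : l1 ∈ Icc (0:ℝ) 1)
    (n : ℕ) : ∀ q ∈ Icc (0:ℝ) 1,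
      ContinuousOn ((Bop l0 l1 β Rl Rh Cl Ch)^[n] 0 q) (Icc 0 1) := by
  induction n with
  | zero => exact fun _ _ => continuousOn_const
  | succ n ih =>
    rw [Function.iterate_succ_apply']
    exact fun _ hq => continuousOn_Bop hl0 hl1 ih hq

theorem IsFix.abs_iterate_Bop_sub_le (hl0 : l0 ∈ Icc (0:ℝ) 1) (hl1 : l1 ∈ Icc (0:ℝ) 1)
    (hβ0 : 0 ≤ β) {V : ℝ → ℝ → ℝ} (hV : IsFix l0 l1 β Rl Rh Cl Ch V) {M : ℝ}
    (hM : ∀ x ∈ Icc (0:ℝ) 1, ∀ y ∈ Icc (0:ℝ) 1, |V x y| ≤ M) (n : ℕ) :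
    ∀ x ∈ Icc (0:ℝ) 1, ∀ y ∈ Icc (0:ℝ) 1,
      |(Bop l0 l1 β Rl Rh Cl Ch)^[n] 0 x y - V x y| ≤ β ^ n * M := by
  induction n with
  | zero => simpa [abs_sub_comm] using hM
  | succ n ih =>
    intro x hx y hy
    rw [Function.iterate_succ_apply', hV x hx y hy, pow_succ', mul_assoc]
    exact abs_Bop_sub_le hl0 hl1 hβ0 ih hx hy

theorem IsFix.tendstoUniformlyOn_iterate_Bop (hl0 : l0 ∈ Icc (0:ℝ) 1)
    (hl1 : l1 ∈ Icc (0:ℝ) 1) (hβ0 : 0 ≤ β) (hβ1 : β < 1) {V : ℝ → ℝ → ℝ}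
    (hV : IsFix l0 l1 β Rl Rh Cl Ch V) (hVb : BddOnSq V) {q : ℝ} (hq : q ∈ Icc (0:ℝ) 1) :
    TendstoUniformlyOn (fun n => (Bop l0 l1 β Rl Rh Cl Ch)^[n] 0 q) (V q) atTop (Icc 0 1) := by
  obtain ⟨M, hM⟩ := hVb
  have hgeo : Tendsto (fun n : ℕ => β ^ n * M) atTop (𝓝 0) := by
    simpa using (tendsto_pow_atTop_nhds_zero_of_lt_one hβ0 hβ1).mul_const M
  rw [Metric.tendstoUniformlyOn_iff]
  intro ε hε
  filter_upwards [hgeo.eventually_lt_const hε] with n hn y hy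
  rw [Real.dist_eq, abs_sub_comm]
  exact (hV.abs_iterate_Bop_sub_le hl0 hl1 hβ0 hM n q hq y hy).trans_lt hn

theorem IsFix.convexOn (hl0 : l0 ∈ Icc (0:ℝ) 1) (hl1 : l1 ∈ Icc (0:ℝ) 1) (hβ0 : 0 ≤ β)
    (hβ1 : β < 1) {V : ℝ → ℝ → ℝ} (hV : IsFix l0 l1 β Rl Rh Cl Ch V) (hVb : BddOnSq V)
    {q : ℝ} (hq : q ∈ Icc (0:ℝ) 1) : ConvexOn ℝ (Icc 0 1) (V q) :=
  .of_tendsto (.of_forall fun n => convexOn_iterate_Bop hl0 hl1 hβ0 n q hq)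
    fun _ hx => (hV.tendstoUniformlyOn_iterate_Bop hl0 hl1 hβ0 hβ1 hVb hq).tendsto_at hx

theorem IsFix.continuousOn (hl0 : l0 ∈ Icc (0:ℝ) 1) (hl1 : l1 ∈ Icc (0:ℝ) 1) (hβ0 : 0 ≤ β)
    (hβ1 : β < 1) {V : ℝ → ℝ → ℝ} (hV : IsFix l0 l1 β Rl Rh Cl Ch V) (hVb : BddOnSq V)
    {q : ℝ} (hq : q ∈ Icc (0:ℝ) 1) : ContinuousOn (V q) (Icc 0 1) :=
  (hV.tendstoUniformlyOn_iterate_Bop hl0 hl1 hβ0 hβ1 hVb hq).continuousOn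
    (.of_forall fun n => continuousOn_iterate_Bop hl0 hl1 n q hq)

theorem Bop_zero_eq_max (hRlh : Rl ≤ Rh) (hClh : Cl ≤ Ch) (hCh2 : Ch ≤ 2 * Cl) (hCh : 0 ≤ Ch)
    (W : ℝ → ℝ → ℝ) {p : ℝ} (hp : p ∈ Icc (0:ℝ) 1) :
    Bop l0 l1 β Rl Rh Cl Ch W 0 p =
      max (Q l0 l1 β Rl Rh Cl Ch W .B2 0 p) (Q l0 l1 β Rl Rh Cl Ch W .Br 0 p) := by
  have hTr : Tr l0 l1 0 = l0 := by simp [Tr]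
  have hBb : Q l0 l1 β Rl Rh Cl Ch W .B2 0 p - Q l0 l1 β Rl Rh Cl Ch W .Bb 0 p
      = p * (Rh - Rl + (Ch - Cl)) + (2 * Cl - Ch) := by
    simp only [Q, hTr]; ring
  have hB1 : Q l0 l1 β Rl Rh Cl Ch W .Br 0 p - Q l0 l1 β Rl Rh Cl Ch W .B1 0 p = Ch := by
    simp only [Q, hTr]; ring
  refine max_eq_right (max_le_max ?_ ?_)
  · linarith only [hBb, hCh2, mul_nonneg hp.1 (by linarith : 0 ≤ Rh - Rl + (Ch - Cl))]
  · linarith only [hB1, hCh]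

end BeliefMDP

theorem edge_threshold_general
    (l0 l1 β Rl Rh Cl Ch : ℝ)
    (hl0 : l0 ∈ Icc (0:ℝ) 1) (hl1 : l1 ∈ Icc (0:ℝ) 1)
    (hβ0 : 0 ≤ β) (hβ1 : β < 1)
    (hRh : 0 < Rh) (hCh : 0 < Ch)
    (hRlh : Rl < Rh)
    (hClh : Cl < Ch) (hCh2 : Ch < 2 * Cl)
    (V : ℝ → ℝ → ℝ) (hVbdd : BddOnSq V)
    (hVfix : IsFix l0 l1 β Rl Rh Cl Ch V) :
    ∃ ρ ∈ Icc (0:ℝ) 1,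
      (∀ p2 ∈ Ico (0:ℝ) ρ, ((0:ℝ), p2) ∈ Phi l0 l1 β Rl Rh Cl Ch V PAct.Br) ∧
      (∀ p2 ∈ Icc ρ (1:ℝ), ((0:ℝ), p2) ∈ Phi l0 l1 β Rl Rh Cl Ch V PAct.B2) := by
  have h0 : (0:ℝ) ∈ Icc (0:ℝ) 1 := left_mem_Icc.2 zero_le_one
  set f := fun p => Q l0 l1 β Rl Rh Cl Ch V .B2 0 p - Q l0 l1 β Rl Rh Cl Ch V .Br 0 p
  have hf : ConcaveOn ℝ (Icc 0 1) f :=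
    (concaveOn_of_affine (convex_Icc 0 1) fun x => by simp only [Q]; ring).sub
      (convexOn_Q hl0 hl1 hβ0 (fun _ hq => hVfix.convexOn hl0 hl1 hβ0 hβ1 hVbdd hq) .Br h0)
  have hfc : ContinuousOn f (Icc 0 1) :=
    have hVc q hq := hVfix.continuousOn hl0 hl1 hβ0 hβ1 hVbdd hq
    (continuousOn_Q hl0 hl1 hVc .B2 h0).sub (continuousOn_Q hl0 hl1 hVc .Br h0)
  have hf1 : f 1 = Rh := by
    have hTr : Tr l0 l1 1 = l1 := by simp [Tr]
    simp only [f, Q, hTr]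
    ring
  obtain ⟨ρ, hρ, hneg, hnonneg⟩ := exists_threshold_of_concaveOn zero_le_one hf hfc (hf1 ▸ hRh.le)
  have hedge p (hp : p ∈ Icc (0:ℝ) 1) :=
    (hVfix 0 h0 p hp).trans (Bop_zero_eq_max hRlh.le hClh.le hCh2.le hCh.le V hp)
  refine ⟨ρ, hρ, fun p hp => ?_, fun p hp => ?_⟩
  · have hp' : p ∈ Icc (0:ℝ) 1 := ⟨hp.1, hp.2.le.trans hρ.2⟩
    exact ⟨h0, hp', (hedge p hp').trans (max_eq_right (sub_neg.1 (hneg p hp)).le)⟩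
  · have hp' : p ∈ Icc (0:ℝ) 1 := ⟨hρ.1.trans hp.1, hp.2⟩
    exact ⟨h0, hp', (hedge p hp').trans (max_eq_left (sub_nonneg.1 (hnonneg p hp)))⟩

/-- On the edge `p1 = 0` the optimal policy has a threshold structure. -/
theorem edge_threshold
    (l0 l1 β Rl Rh Cl Ch : ℝ)
    (hl0 : l0 ∈ Icc (0:ℝ) 1) (hl1 : l1 ∈ Icc (0:ℝ) 1) (hl01 : l0 < l1)
    (hβ0 : 0 ≤ β) (hβ1 : β < 1)
    (hRl : 0 < Rl) (hRh : 0 < Rh) (hCl : 0 < Cl) (hCh : 0 < Ch)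
    (hRlh : Rl < Rh) (hRh2 : Rh < 2 * Rl)
    (hClh : Cl < Ch) (hCh2 : Ch < 2 * Cl)
    (hRhCh : Ch < Rh) (hRlCl : Cl < Rl)
    (V : ℝ → ℝ → ℝ) (hVbdd : BddOnSq V)
    (hVfix : IsFix l0 l1 β Rl Rh Cl Ch V) :
    ∃ ρ ∈ Icc (0:ℝ) 1,
      (∀ p2 ∈ Ico (0:ℝ) ρ, ((0:ℝ), p2) ∈ Phi l0 l1 β Rl Rh Cl Ch V PAct.Br) ∧
      (∀ p2 ∈ Icc ρ (1:ℝ), ((0:ℝ), p2) ∈ Phi l0 l1 β Rl Rh Cl Ch V PAct.B2) :=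
  edge_threshold_general l0 l1 β Rl Rh Cl Ch hl0 hl1 hβ0 hβ1 hRh hCh hRlh hClh hCh2 V hVbdd hVfix
end
end
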